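/- Let n ≥ 2 even and let φ(z) = z·ψ(z^n) commute with τ_n(z) = e^{πi/n}/conj(z). Writing ψ(z) = (Σ_{k=0}^r a_k z^k)/(Σ_{k=0}^r b_k z^k) with the numerator and denominator coprime and max degree r, then r is even and there exist λ ∈ ℂ with |λ| = 1 such that b_k = conj(λ)·(-1)^k·conj(a_{r-k}) for all k. -/

import Mathlib

/-!
Write `Ā` for the polynomial with conjugated coefficients and `P*` for the reflection
`X ^ r P(1/X)` of `P` in degree `r`. Evaluating `τ_n ∘ φ = φ ∘ τ_n` at a finite point `z`,
with `t = conj z ^ n` and using `ω_{2n} ^ n = -1`, gives `Ā(t) A(-1/t) = B̄(t) B(-1/t)`,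
that is, the polynomial identity `Ā(-X) A* = B̄(-X) B*`. Both pairs `Ā(-X), B̄(-X)` and
`A*, B*` are coprime, so `A* = c B̄(-X)` and `B* = c Ā(-X)` for a constant `c`. Going
from `B` to `A` and back multiplies `B` by `(-1) ^ r |c| ^ 2`, which forces `r` even and
`|c| = 1`; then `λ = conj c`.
-/

open OnePoint Complex Polynomial

/-- The Möbius transformation determined by the matrix `[[a,b],[c,d]]`,
acting on the Riemann sphere `OnePoint ℂ`. -/
noncomputable def moeb (a b c d : ℂ) (p : OnePoint ℂ) : OnePoint ℂ :=
  OnePoint.elim p (if c = 0 then ∞ else ((a / c : ℂ) : OnePoint ℂ))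
    (fun z => if c * z + d = 0 then ∞ else (((a * z + b) / (c * z + d) : ℂ) : OnePoint ℂ))

/-- Complex conjugation extended to the Riemann sphere. -/
noncomputable def sphConj (p : OnePoint ℂ) : OnePoint ℂ :=
  OnePoint.elim p ∞ (fun z => ((starRingEnd ℂ) z : OnePoint ℂ))

/-- The imaginary reflection `τ(z) = -1/conj z` on the Riemann sphere. -/
noncomputable def tauSph (p : OnePoint ℂ) : OnePoint ℂ :=
  moeb 0 (-1) 1 0 (sphConj p)

/-- The rational map on the Riemann sphere determined by a quotient `P/Q`
of (coprime) polynomials. -/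
noncomputable def ratMap (P Q : Polynomial ℂ) (p : OnePoint ℂ) : OnePoint ℂ :=
  OnePoint.elim p
    (if Q.degree < P.degree then ∞
     else ((P.coeff Q.natDegree / Q.leadingCoeff : ℂ) : OnePoint ℂ))
    (fun z => if Q.eval z = 0 then ∞ else ((P.eval z / Q.eval z : ℂ) : OnePoint ℂ))

open ComplexConjugate

noncomputable def tauN (n : ℕ) (p : OnePoint ℂ) : OnePoint ℂ :=
  moeb 0 (exp (Real.pi * I / n)) 1 0 (sphConj p)

noncomputable def phiMap (n : ℕ) (A B : ℂ[X]) : OnePoint ℂ → OnePoint ℂ :=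
  ratMap (X * A.comp (X ^ n)) (B.comp (X ^ n))

lemma exp_pi_mul_I_div_pow {n : ℕ} (hn : n ≠ 0) : exp (Real.pi * I / n) ^ n = -1 := by
  rw [← exp_nat_mul, mul_div_cancel₀ _ (Nat.cast_ne_zero.2 hn), exp_pi_mul_I]

lemma tauN_coe (n : ℕ) (z : ℂ) :
    tauN n z = if z = 0 then ∞ else ((exp (Real.pi * I / n) / conj z : ℂ) : OnePoint ℂ) := by
  simp [tauN, sphConj, moeb]

lemma phiMap_coe (n : ℕ) (A B : ℂ[X]) (z : ℂ) :
    phiMap n A B z =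
      if B.eval (z ^ n) = 0 then ∞
      else ((z * A.eval (z ^ n) / B.eval (z ^ n) : ℂ) : OnePoint ℂ) := by
  simp [phiMap, ratMap]

lemma eval_map_conj_mul_eq_of_commute {n : ℕ} (hn : n ≠ 0) {A B : ℂ[X]}
    (hcomm : Function.Commute (tauN n) (phiMap n A B)) {y : ℂ} (hy : y ≠ 0)
    (hb : (B.map conj).eval (y ^ n) ≠ 0) :
    (A.map conj).eval (y ^ n) * A.eval (-(y ^ n)⁻¹)
      = (B.map conj).eval (y ^ n) * B.eval (-(y ^ n)⁻¹) := by
  have hconj (P : ℂ[X]) : (P.map conj).eval (y ^ n) = conj (P.eval (conj y ^ n)) := by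
    rw [eval_map, ← eval₂_at_apply, map_pow, conj_conj]
  simp only [hconj] at hb ⊢
  have hy' : conj y ≠ 0 := (_root_.map_ne_zero _).2 hy
  have h := hcomm ((conj y : ℂ) : OnePoint ℂ)
  rw [phiMap_coe, if_neg ((_root_.map_ne_zero _).1 hb), tauN_coe, tauN_coe, if_neg hy', conj_conj,
    phiMap_coe, div_pow, exp_pi_mul_I_div_pow hn, neg_div, one_div] at h
  set a := A.eval (conj y ^ n)
  set b := B.eval (conj y ^ n)
  set w := -(y ^ n)⁻¹
  split_ifs at h with ha hw hw
  · rw [hw, (by simpa [hy', (_root_.map_ne_zero _).1 hb] using ha : a = 0)]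
    simp
  · exact absurd h (OnePoint.infty_ne_coe _)
  · exact absurd h (OnePoint.coe_ne_infty _)
  · rw [OnePoint.coe_eq_coe] at h
    have hca : conj a ≠ 0 := (_root_.map_ne_zero _).2 fun h0 => ha (by simp [h0])
    rw [map_div₀, map_mul, conj_conj] at h
    field_simp at h
    exact h.symm

lemma eq_of_eval_eq_of_eval_ne_zero {R : Type*} [CommRing R] [IsDomain R] [Infinite R]
    {f g p : R[X]} (hp : p ≠ 0) (h : ∀ x, p.eval x ≠ 0 → f.eval x = g.eval x) : f = g := by
  have hfgp : (f - g) * p = 0 := Polynomial.funext fun x => by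
    by_cases hx : p.eval x = 0
    · simp [hx]
    · simp [h x hx]
  exact sub_eq_zero.1 ((mul_eq_zero.1 hfgp).resolve_right hp)

lemma eval_reflect {K : Type*} [Field K] {N : ℕ} {f : K[X]} (hf : f.natDegree ≤ N) {x : K}
    (hx : x ≠ 0) : (reflect N f).eval x = x ^ N * f.eval x⁻¹ := by
  let := invertibleOfNonzero (inv_ne_zero hx)
  have h := eval₂_reflect_mul_pow (RingHom.id K) x⁻¹ N f hf
  rw [invOf_eq_inv, inv_inv, inv_pow] at h
  rw [← eval₂_id, ← eval₂_id, ← h]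
  field_simp

lemma coeff_comp_neg_X {R : Type*} [Ring R] (p : R[X]) (k : ℕ) :
    (p.comp (-X)).coeff k = (-1) ^ k * p.coeff k := by
  rw [show (-X : R[X]) = C (-1) * X by simp, comp_C_mul_X_coeff]
  exact ((Commute.neg_one_left _).pow_left k).eq.symm

lemma map_conj_comp_neg_X_mul_reflect_eq {n r : ℕ} (hn : n ≠ 0) {A B : ℂ[X]}
    (hA : A.natDegree ≤ r) (hB : B.natDegree ≤ r) (hB0 : (B.map conj).comp (-X) ≠ 0)
    (hcomm : Function.Commute (tauN n) (phiMap n A B)) :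
    (A.map conj).comp (-X) * reflect r A = (B.map conj).comp (-X) * reflect r B := by
  refine eq_of_eval_eq_of_eval_ne_zero (mul_ne_zero X_ne_zero hB0) fun u hu => ?_
  obtain ⟨hu0, hbu⟩ := mul_ne_zero_iff.1 (by simpa only [eval_mul, eval_X] using hu)
  obtain ⟨y, hy⟩ := IsAlgClosed.exists_pow_nat_eq (-u) (Nat.pos_of_ne_zero hn)
  have hy0 : y ≠ 0 := by
    rintro rfl
    exact hu0 (by simpa [zero_pow hn] using hy.symm)
  have hyu := eval_map_conj_mul_eq_of_commute hn hcomm hy0 (by simpa [hy] using hbu)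
  rw [hy, inv_neg, neg_neg] at hyu
  simp only [eval_mul, eval_comp, eval_neg, eval_X, eval_reflect hA hu0, eval_reflect hB hu0]
  linear_combination u ^ r * hyu

lemma exists_isUnit_eq_mul_of_mul_eq_mul {R : Type*} [CommRing R] [IsDomain R] {p q f g : R}
    (hpq : IsCoprime p q) (hfg : IsCoprime f g) (hq : q ≠ 0) (h : p * f = q * g) :
    ∃ u, IsUnit u ∧ f = q * u ∧ g = p * u := by
  obtain ⟨u, rfl⟩ : q ∣ f := hpq.symm.dvd_of_dvd_mul_left ⟨g, h⟩
  have hg : g = p * u := mul_left_cancel₀ hq (by rw [← h]; ring)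
  exact ⟨u, hfg.isUnit_of_dvd' (dvd_mul_left u q) (hg ▸ dvd_mul_left u p), rfl, hg⟩

lemma coeff_max_natDegree_ne_zero {R : Type*} [Semiring R] {A B : R[X]} (h : A ≠ 0 ∨ B ≠ 0) :
    A.coeff (max A.natDegree B.natDegree) ≠ 0 ∨
      B.coeff (max A.natDegree B.natDegree) ≠ 0 := by
  wlog hle : B.natDegree ≤ A.natDegree generalizing A B
  · rw [max_comm, or_comm]
    exact this h.symm (by omega)
  rw [max_eq_left hle]
  by_cases hA : A = 0
  · subst hA
    rw [natDegree_zero, nonpos_iff_eq_zero] at hle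
    rw [natDegree_zero, ← hle]
    exact Or.inr (leadingCoeff_ne_zero.2 (h.resolve_left (not_not.2 rfl)))
  · exact Or.inl (leadingCoeff_ne_zero.2 hA)

lemma isCoprime_reflect {K : Type*} [Field K] {A B : K[X]} (h : IsCoprime A B) {r : ℕ}
    (hr : max A.natDegree B.natDegree = r) : IsCoprime (reflect r A) (reflect r B) := by
  rw [isCoprime_iff_aeval_ne_zero_of_isAlgClosed K (AlgebraicClosure K)]
  intro a
  by_cases ha : a = 0
  · have hAB : A ≠ 0 ∨ B ≠ 0 := by
      by_contra! h0
      exact not_isCoprime_zero_zero (h0.1 ▸ h0.2 ▸ h)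
    simpa [ha, aeval_def, eval₂_at_zero, coeff_reflect, hr] using coeff_max_natDegree_ne_zero hAB
  · let := invertibleOfNonzero (inv_ne_zero ha)
    have hinv : ⅟a⁻¹ = a := by rw [invOf_eq_inv, inv_inv]
    rw [aeval_def, aeval_def, ← hinv, Ne, Ne,
      eval₂_reflect_eq_zero_iff _ _ _ _ (hr ▸ le_max_left _ _),
      eval₂_reflect_eq_zero_iff _ _ _ _ (hr ▸ le_max_right _ _)]
    simpa only [aeval_def] using aeval_ne_zero_of_isCoprime h a⁻¹

lemma coeff_eq_of_reflect_eq_mul_C {r : ℕ} {P Q : ℂ[X]} {c : ℂ}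
    (h : reflect r P = (Q.map conj).comp (-X) * C c) {i j : ℕ} (hij : i + j = r) :
    P.coeff i = (-1) ^ j * conj (Q.coeff j) * c := by
  have hj := congrArg (coeff · j) h
  simpa only [coeff_reflect, revAt_le (show j ≤ r by omega), show r - j = i by omega,
    coeff_mul_C, coeff_comp_neg_X, coeff_map] using hj

lemma even_and_norm_eq_one_of_neg_one_pow_mul_conj_mul_self {r : ℕ} {c : ℂ}
    (h : (-1) ^ r * (conj c * c) = 1) : Even r ∧ ‖c‖ = 1 := by
  rw [mul_comm (conj c), mul_conj, normSq_eq_norm_sq] at h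
  rcases Nat.even_or_odd r with hr | hr
  · rw [hr.neg_one_pow, one_mul] at h
    exact ⟨hr, (pow_eq_one_iff_of_nonneg (norm_nonneg c) two_ne_zero).1 (by exact_mod_cast h)⟩
  · rw [hr.neg_one_pow, neg_one_mul, neg_eq_iff_eq_neg] at h
    have : ‖c‖ ^ 2 = -1 := by exact_mod_cast h
    nlinarith [sq_nonneg ‖c‖]

theorem coefficients_of_tau_n_symmetric_map_general
    (n r : ℕ) (hn : 2 ≤ n)
    (A B : Polynomial ℂ) (hAB : IsCoprime A B)
    (hr : max A.natDegree B.natDegree = r) (hB : B ≠ 0)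
    (hcomm : ∀ p, moeb 0 (Complex.exp (Real.pi * Complex.I / n)) 1 0
        (sphConj (ratMap (X * A.comp (X ^ n)) (B.comp (X ^ n)) p))
      = ratMap (X * A.comp (X ^ n)) (B.comp (X ^ n))
          (moeb 0 (Complex.exp (Real.pi * Complex.I / n)) 1 0 (sphConj p))) :
    Even r ∧ ∃ lam : ℂ, ‖lam‖ = 1 ∧
      ∀ k ≤ r, B.coeff k
        = (starRingEnd ℂ) lam * (-1) ^ k * (starRingEnd ℂ) (A.coeff (r - k)) := by
  have hBconj : (B.map conj).comp (-X) ≠ 0 := by simpa [comp_neg_X_eq_zero_iff] using hB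
  have hpoly := map_conj_comp_neg_X_mul_reflect_eq (by omega) (hr ▸ le_max_left _ _)
    (hr ▸ le_max_right _ _) hBconj hcomm
  obtain ⟨h, hunit, hAh, hBh⟩ := exists_isUnit_eq_mul_of_mul_eq_mul
    ((hAB.map (mapRingHom conj)).map (compRingHom (-X))) (isCoprime_reflect hAB hr) hBconj hpoly
  obtain ⟨c, -, rfl⟩ := isUnit_iff.1 hunit
  obtain ⟨hreven, hc⟩ : Even r ∧ ‖c‖ = 1 := by
    refine even_and_norm_eq_one_of_neg_one_pow_mul_conj_mul_self
      (mul_right_cancel₀ (leadingCoeff_ne_zero.2 hB) ?_)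
    have hdeg : B.natDegree + (r - B.natDegree) = r := by omega
    have hBd := coeff_eq_of_reflect_eq_mul_C hBh hdeg
    rw [coeff_eq_of_reflect_eq_mul_C hAh ((add_comm _ _).trans hdeg), map_mul, map_mul,
      map_pow, map_neg, map_one, conj_conj] at hBd
    rw [← hdeg, pow_add, leadingCoeff]
    linear_combination -hBd
  refine ⟨hreven, conj c, by simpa using hc, fun k hk => ?_⟩
  have hparity : (r - k) % 2 = k % 2 := by
    rcases hreven with ⟨m, rfl⟩
    omega
  rw [conj_conj, coeff_eq_of_reflect_eq_mul_C hBh (show k + (r - k) = r by omega),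
    neg_one_pow_eq_pow_mod_two (r - k), neg_one_pow_eq_pow_mod_two k, hparity]
  ring

/-- if `φ(z) = z ψ(z^n)` (`n ≥ 2` even) commutes with
`τ_n(z) = e^{πi/n}/conj z`, then `r = deg ψ` is even and the coefficients of
the denominator of `ψ` satisfy `b_k = conj(λ)(-1)^k conj(a_{r-k})` for some
unimodular `λ`. -/
theorem coefficients_of_tau_n_symmetric_map
    (n r : ℕ) (hn : 2 ≤ n) (hne : Even n)
    (A B : Polynomial ℂ) (hAB : IsCoprime A B)
    (hr : max A.natDegree B.natDegree = r) (hB : B ≠ 0)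
    (hcomm : ∀ p, moeb 0 (Complex.exp (Real.pi * Complex.I / n)) 1 0
        (sphConj (ratMap (X * A.comp (X ^ n)) (B.comp (X ^ n)) p))
      = ratMap (X * A.comp (X ^ n)) (B.comp (X ^ n))
          (moeb 0 (Complex.exp (Real.pi * Complex.I / n)) 1 0 (sphConj p))) :
    Even r ∧ ∃ lam : ℂ, ‖lam‖ = 1 ∧
      ∀ k ≤ r, B.coeff k
        = (starRingEnd ℂ) lam * (-1) ^ k * (starRingEnd ℂ) (A.coeff (r - k)) :=
  coefficients_of_tau_n_symmetric_map_general n r hn A B hAB hr hB hcomm
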